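/- arXiv:2605.25684 — 3 statements merged into one kernel-verified Lean document; each statement's English description precedes it below -/
import Mathlib

section
/- Let A and B be probability matrices with lim_{n→∞} b_{n0} = 0. Assume the pair (A,B) satisfies (*C) and the pair (ΔA, BΔ) satisfies (*2C). If E is a reflexive locally convex Hausdorff topological vector space over ℂ, then every A-ergodic continuous linear operator on E is B-ergodic. -/
open Filter Finset Topology ZeroAtInfty
open scoped ENNReal ComplexOrder

noncomputable section

/-- An infinite matrix of complex numbers, with rows and columns indexed by `ℕ`. -/
abbrev Mat : Type := ℕ → ℕ → ℂ

/-- `A` is lower triangular: `A n k = 0` whenever `k > n`. -/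
def Mat.LowerTri (A : Mat) : Prop := ∀ n k : ℕ, n < k → A n k = 0

/-- The product of two (lower triangular) infinite matrices; for lower triangular
matrices all the sums involved are finite. -/
def Mat.mul (C A : Mat) : Mat := fun n k => ∑ j ∈ Finset.range (n + 1), C n j * A j k

/-- The identity matrix. -/
def Mat.one : Mat := fun n k => if n = k then 1 else 0

/-- The matrix `Δ`, with `Δ n n = 1`, `Δ n (n-1) = -1` (for `n ≥ 1`) and `0` elsewhere. -/
def Mat.delta : Mat := fun n i => (if n = i then 1 else 0) - (if n = i + 1 then 1 else 0)

/-- The `n`-th absolute row sum `∑_{i=0}^{n} |c_{ni}|` of a lower triangular matrix. -/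
def Mat.rowSum (C : Mat) (n : ℕ) : ℝ := ∑ i ∈ Finset.range (n + 1), ‖C n i‖

/-- Property (*C): the absolute row sums of `C` are (uniformly) bounded. -/
def Mat.StarC (C : Mat) : Prop := ∃ K : ℝ, ∀ n : ℕ, C.rowSum n ≤ K

/-- Property (*2C): (*C) together with: every column of `C` tends to `0`. -/
def Mat.Star2C (C : Mat) : Prop :=
  C.StarC ∧ ∀ i : ℕ, Tendsto (fun n => C n i) atTop (𝓝 (0 : ℂ))

/-- Property (*3C): the absolute row sums of `C` tend to `0`. -/
def Mat.Star3C (C : Mat) : Prop := Tendsto (fun n => C.rowSum n) atTop (𝓝 (0 : ℝ))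

/-- The pair `(A, B)` satisfies (*C): there is a lower triangular `C` with `CA = B`
whose absolute row sums are bounded. -/
def PairStarC (A B : Mat) : Prop := ∃ C : Mat, C.LowerTri ∧ Mat.mul C A = B ∧ C.StarC

/-- The pair `(A, B)` satisfies (*2C). -/
def PairStar2C (A B : Mat) : Prop := ∃ C : Mat, C.LowerTri ∧ Mat.mul C A = B ∧ C.Star2C

/-- The pair `(A, B)` satisfies (*3C). -/
def PairStar3C (A B : Mat) : Prop := ∃ C : Mat, C.LowerTri ∧ Mat.mul C A = B ∧ C.Star3C

/-- A probability matrix: lower triangular, nonnegative (real) entries, rows summing to `1`. -/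
def Mat.IsProb (A : Mat) : Prop :=
  A.LowerTri ∧ (∀ n k : ℕ, 0 ≤ A n k) ∧ ∀ n : ℕ, (∑ i ∈ Finset.range (n + 1), A n i) = 1

/-- The action of a lower triangular matrix on a sequence: `(Cx)_n = ∑_{i=0}^n c_{ni} x_i`. -/
def Mat.apply (C : Mat) (x : ℕ → ℂ) (n : ℕ) : ℂ := ∑ i ∈ Finset.range (n + 1), C n i * x i

section Ops

variable {E : Type*} [AddCommGroup E] [Module ℂ E] [UniformSpace E]
  [IsUniformAddGroup E] [ContinuousSMul ℂ E]

/-- `(A𝒯)_n = ∑_{i=0}^{n} a_{ni} T_i` for a sequence `𝒯` of continuous linear operators. -/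
def matOp (A : Mat) (T : ℕ → E →L[ℂ] E) (n : ℕ) : E →L[ℂ] E :=
  ∑ i ∈ Finset.range (n + 1), A n i • T i

/-- The sequence `𝒯` is `A`-bounded: `{(A𝒯)_n : n ∈ ℕ}` is equicontinuous. -/
def MatBounded (A : Mat) (T : ℕ → E →L[ℂ] E) : Prop :=
  Equicontinuous fun n => ⇑(matOp A T n)

/-- The sequence `𝒯` is `A`-null: `(A𝒯)_n x → 0` for every `x`. -/
def MatNull (A : Mat) (T : ℕ → E →L[ℂ] E) : Prop :=
  ∀ x : E, Tendsto (fun n => matOp A T n x) atTop (𝓝 (0 : E))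

/-- The sequence `𝒯` is `A`-ergodic: `(A𝒯)_n` converges pointwise to a continuous
linear operator `P`. -/
def MatErgodic (A : Mat) (T : ℕ → E →L[ℂ] E) : Prop :=
  ∃ P : E →L[ℂ] E, ∀ x : E, Tendsto (fun n => matOp A T n x) atTop (𝓝 (P x))

/-- `(AT)_n = ∑_{i=0}^{n} a_{ni} T^i` for a single operator `T`. -/
def matOpPow (A : Mat) (T : E →L[ℂ] E) (n : ℕ) : E →L[ℂ] E :=
  matOp A (fun i => T ^ i) n

/-- A single operator `T` is `A`-bounded if the sequence of its powers is. -/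
def OpBounded (A : Mat) (T : E →L[ℂ] E) : Prop := MatBounded A fun i => T ^ i

/-- A single operator `T` is `A`-null if the sequence of its powers is. -/
def OpNull (A : Mat) (T : E →L[ℂ] E) : Prop := MatNull A fun i => T ^ i

/-- A single operator `T` is `A`-ergodic if the sequence of its powers is. -/
def OpErgodic (A : Mat) (T : E →L[ℂ] E) : Prop := MatErgodic A fun i => T ^ i

end Ops

/-- `S(n, p) = ∑_{i=1}^{n} i^p`. -/
def Sp (p : ℝ) (n : ℕ) : ℝ := ∑ i ∈ Finset.range n, ((i : ℝ) + 1) ^ p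

/-- The probability matrix `M_p`, reindexed so that rows and columns start at `0`
(entry `(n, i)` here corresponds to entry `(n+1, i+1)` in the paper). -/
def Mp (p : ℝ) : Mat := fun n i =>
  if i ≤ n then ((((i : ℝ) + 1) ^ p / Sp p (n + 1) : ℝ) : ℂ) else 0

/-- The (lower triangular) inverse of `M_p`. -/
def MpInv (p : ℝ) : Mat := fun n i =>
  if i = n then ((Sp p (n + 1) / ((n : ℝ) + 1) ^ p : ℝ) : ℂ)
  else if i + 1 = n then ((-(Sp p n) / ((n : ℝ) + 1) ^ p : ℝ) : ℂ)
  else 0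

/-- The Banach space `ℓ∞` of bounded complex sequences with the sup norm. -/
abbrev ellInf : Type := ↥(lp (fun _ : ℕ => ℂ) ∞)

/-- The Banach space `c₀` of complex sequences tending to `0`, with the sup norm. -/
abbrev czero : Type := C₀(ℕ, ℂ)

set_option linter.unusedSectionVars false
section Helpers

open Filter Finset Topology

variable {E : Type*} [AddCommGroup E] [Module ℂ E] [UniformSpace E]
  [IsUniformAddGroup E] [ContinuousSMul ℂ E]

lemma seminorm_sum_le (p : Seminorm ℂ E) {ι : Type*} (s : Finset ι) (f : ι → E) :
    p (∑ i ∈ s, f i) ≤ ∑ i ∈ s, p (f i) := by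
  classical
  induction s using Finset.cons_induction with
  | empty => simp
  | cons a s ha ih =>
    rw [Finset.sum_cons, Finset.sum_cons]
    exact le_trans (map_add_le_add p _ _) (by gcongr)

lemma matOpPow_apply' (A : Mat) (T : E →L[ℂ] E) (n : ℕ) (x : E) :
    matOpPow A T n x = ∑ i ∈ Finset.range (n + 1), A n i • (T ^ i) x := by
  simp [matOpPow, matOp, ContinuousLinearMap.sum_apply]

lemma pow_apply_succ (T : E →L[ℂ] E) (k : ℕ) (y : E) :
    (T ^ (k + 1)) y = (T ^ k) (T y) := by
  rw [pow_succ, ContinuousLinearMap.mul_apply]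

lemma pow_apply_succ' (T : E →L[ℂ] E) (k : ℕ) (y : E) :
    (T ^ (k + 1)) y = T ((T ^ k) y) := by
  rw [pow_succ', ContinuousLinearMap.mul_apply]

lemma mul_lowerTri (C A : Mat) (hA : A.LowerTri) : (Mat.mul C A).LowerTri := by
  intro n k hk
  apply Finset.sum_eq_zero
  intro j hj
  rw [Finset.mem_range] at hj
  rw [hA j k (by omega), mul_zero]

lemma matOpPow_mul_apply (C A : Mat) (hA : A.LowerTri) (T : E →L[ℂ] E) (n : ℕ) (x : E) :
    matOpPow (Mat.mul C A) T n x = ∑ j ∈ Finset.range (n + 1), C n j • matOpPow A T j x := by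
  have hinner : ∀ j ∈ Finset.range (n + 1),
      C n j • matOpPow A T j x = ∑ k ∈ Finset.range (n + 1), (C n j * A j k) • (T ^ k) x := by
    intro j hj
    rw [Finset.mem_range] at hj
    rw [matOpPow_apply', Finset.smul_sum]
    rw [Finset.sum_subset (Finset.range_subset_range.mpr (by omega : j + 1 ≤ n + 1))
      (fun k _ hk => by
        rw [Finset.mem_range, not_lt] at hk
        rw [hA j k (by omega), zero_smul, smul_zero])]
    exact Finset.sum_congr rfl fun k _ => by rw [smul_smul]
  rw [Finset.sum_congr rfl hinner, matOpPow_apply']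
  rw [Finset.sum_comm]
  exact Finset.sum_congr rfl fun k _ => by
    rw [Mat.mul, Finset.sum_smul]

lemma rowsum_one {A B : Mat} (C : Mat) (hAtri : A.LowerTri)
    (hAsum : ∀ n, (∑ i ∈ Finset.range (n + 1), A n i) = 1)
    (hBsum : ∀ n, (∑ i ∈ Finset.range (n + 1), B n i) = 1)
    (hCA : Mat.mul C A = B) (n : ℕ) :
    ∑ j ∈ Finset.range (n + 1), C n j = 1 := by
  have h1 : ∑ k ∈ Finset.range (n + 1), Mat.mul C A n k = 1 := by rw [hCA]; exact hBsum n
  rw [show ∑ k ∈ Finset.range (n + 1), Mat.mul C A n k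
      = ∑ j ∈ Finset.range (n + 1), C n j * (∑ k ∈ Finset.range (n + 1), A j k) by
    simp only [Mat.mul]
    rw [Finset.sum_comm]
    exact Finset.sum_congr rfl fun j _ => (Finset.mul_sum _ _ _).symm] at h1
  rw [← h1]
  refine Finset.sum_congr rfl fun j hj => ?_
  rw [Finset.mem_range] at hj
  rw [← Finset.sum_subset (Finset.range_subset_range.mpr (by omega : j + 1 ≤ n + 1))
    (fun k _ hk => by
      rw [Finset.mem_range, not_lt] at hk
      exact hAtri j k (by omega)), hAsum j, mul_one]

lemma deltaMul_entry (A : Mat) (n k : ℕ) :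
    Mat.mul Mat.delta A (n + 1) k = A (n + 1) k - A n k := by
  simp only [Mat.mul, Mat.delta, sub_mul, Finset.sum_sub_distrib, ite_mul, one_mul,
    zero_mul, add_left_inj, Finset.sum_ite_eq, Finset.mem_range]
  rw [if_pos (by omega : n + 1 < n + 1 + 1), if_pos (by omega : n < n + 1 + 1)]

lemma mulDelta_entry (B : Mat) (hB : B.LowerTri) (n k : ℕ) (hk : k < n + 1) :
    Mat.mul B Mat.delta n k = B n k - B n (k + 1) := by
  rw [Mat.mul]
  simp only [Mat.delta, mul_sub, Finset.sum_sub_distrib, mul_ite, mul_one, mul_zero]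
  rw [Finset.sum_ite_eq', Finset.sum_ite_eq']
  simp only [Finset.mem_range]
  rw [if_pos hk]
  by_cases hk1 : k + 1 < n + 1
  · rw [if_pos hk1]
  · rw [if_neg hk1, hB n (k + 1) (by omega)]

lemma deltaA_tendsto (A : Mat) (hA : A.LowerTri) (T : E →L[ℂ] E) (x : E) (P : E)
    (hP : Tendsto (fun n => matOpPow A T n x) atTop (𝓝 P)) :
    Tendsto (fun n => matOpPow (Mat.mul Mat.delta A) T n x) atTop (𝓝 0) := by
  rw [← tendsto_add_atTop_iff_nat 1]
  have key : ∀ n : ℕ, matOpPow (Mat.mul Mat.delta A) T (n + 1) x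
      = matOpPow A T (n + 1) x - matOpPow A T n x := by
    intro n
    rw [matOpPow_apply', matOpPow_apply',
      Finset.sum_congr rfl (fun k _ => by rw [deltaMul_entry, sub_smul]),
      Finset.sum_sub_distrib]
    congr 1
    rw [matOpPow_apply', Finset.sum_range_succ, hA n (n + 1) (by omega), zero_smul, add_zero]
  rw [show (fun n => matOpPow (Mat.mul Mat.delta A) T (n + 1) x)
      = fun n => matOpPow A T (n + 1) x - matOpPow A T n x from funext key]
  have h2 : Tendsto (fun n => matOpPow A T (n + 1) x) atTop (𝓝 P) :=
    (tendsto_add_atTop_iff_nat 1).mpr hP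
  simpa using h2.sub hP

lemma bdelta_identity (B : Mat) (hB : B.LowerTri) (T : E →L[ℂ] E) (n : ℕ) (x : E) :
    matOpPow B T n x - T (matOpPow B T n x)
      = B n 0 • x - T (matOpPow (Mat.mul B Mat.delta) T n x) := by
  have hTB : T (matOpPow (Mat.mul B Mat.delta) T n x)
      = T (matOpPow B T n x) - (matOpPow B T n x - B n 0 • x) := by
    rw [matOpPow_apply', map_sum]
    rw [Finset.sum_congr rfl (fun k hk => by
      rw [mulDelta_entry B hB n k (Finset.mem_range.mp hk), sub_smul, map_sub,
        map_smul, map_smul, ← pow_apply_succ'])]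
    rw [Finset.sum_sub_distrib]
    congr 1
    · rw [matOpPow_apply', map_sum]
      exact Finset.sum_congr rfl fun k _ => by rw [map_smul, ← pow_apply_succ']
    · have h1 : ∑ k ∈ Finset.range (n + 1), B n (k + 1) • (T ^ (k + 1)) x
          = (∑ m ∈ Finset.range (n + 2), B n m • (T ^ m) x) - B n 0 • (T ^ 0) x :=
        eq_sub_of_add_eq (Finset.sum_range_succ' (fun m => B n m • (T ^ m) x) (n + 1)).symm
      rw [h1, Finset.sum_range_succ, hB n (n + 1) (by omega), zero_smul, add_zero,
        matOpPow_apply']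
      simp
  rw [hTB]
  abel

lemma clusterPt_eq_of_tendsto {X : Type*} [TopologicalSpace X] [T2Space X]
    {u : ℕ → X} {a b : X} (h1 : Tendsto u atTop (𝓝 b))
    (h2 : MapClusterPt a atTop u) : a = b :=
  t2_iff_nhds.mp ‹_› (ClusterPt.mono h2 h1)

lemma toeplitz_null {κ : Type*} [Nonempty κ] {q : SeminormFamily ℂ E κ}
    (hq : WithSeminorms q) (c : Mat) (K : ℝ)
    (hK : ∀ n, ∑ j ∈ Finset.range (n + 1), ‖c n j‖ ≤ K)
    (hcol : ∀ j, Tendsto (fun n => c n j) atTop (𝓝 (0 : ℂ)))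
    {y : ℕ → E} (hy : Tendsto y atTop (𝓝 0)) :
    Tendsto (fun n => ∑ j ∈ Finset.range (n + 1), c n j • y j) atTop (𝓝 0) := by
  have hK0 : (0 : ℝ) ≤ K :=
    le_trans (Finset.sum_nonneg fun _ _ => norm_nonneg _) (hK 0)
  rw [hq.tendsto_nhds]
  intro i ε hε
  set p : Seminorm ℂ E := q i with hp
  have hpc : Continuous p := hq.continuous_seminorm i
  have hpy : Tendsto (fun j => p (y j)) atTop (𝓝 0) := by
    have h := (hpc.tendsto 0).comp hy
    simpa [map_zero, Function.comp_def] using h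
  set δ : ℝ := ε / (2 * (K + 1)) with hδdef
  have hδ : 0 < δ := by positivity
  obtain ⟨N, hN⟩ : ∃ N : ℕ, ∀ j ≥ N, p (y j) < δ :=
    Filter.eventually_atTop.mp (hpy.eventually (gt_mem_nhds hδ))
  have hhead : Tendsto (fun n => ∑ j ∈ Finset.range N, ‖c n j‖ * p (y j)) atTop (𝓝 0) := by
    have hterm : ∀ j : ℕ, Tendsto (fun n => ‖c n j‖ * p (y j)) atTop (𝓝 0) := fun j => by
      simpa using ((hcol j).norm.mul_const (p (y j)))
    simpa using tendsto_finset_sum (Finset.range N) fun j _ => hterm j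
  have hhead' : ∀ᶠ n in atTop, ∑ j ∈ Finset.range N, ‖c n j‖ * p (y j) < ε / 2 :=
    hhead.eventually (gt_mem_nhds (by positivity))
  filter_upwards [hhead', Filter.eventually_ge_atTop N] with n hn hnN
  rw [sub_zero]
  have step1 : p (∑ j ∈ Finset.range (n + 1), c n j • y j)
      ≤ ∑ j ∈ Finset.range (n + 1), ‖c n j‖ * p (y j) := by
    refine le_trans (seminorm_sum_le p _ _) (le_of_eq ?_)
    exact Finset.sum_congr rfl fun j _ => map_smul_eq_mul p _ _
  have step2 : ∑ j ∈ Finset.range (n + 1), ‖c n j‖ * p (y j)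
      = (∑ j ∈ Finset.range N, ‖c n j‖ * p (y j))
        + ∑ j ∈ Finset.Ico N (n + 1), ‖c n j‖ * p (y j) := by
    rw [Finset.range_eq_Ico, ← Finset.sum_Ico_consecutive _ (Nat.zero_le N)
      (by omega : N ≤ n + 1), ← Finset.range_eq_Ico]
  have step3 : ∑ j ∈ Finset.Ico N (n + 1), ‖c n j‖ * p (y j) ≤ (K + 1) * δ := by
    calc ∑ j ∈ Finset.Ico N (n + 1), ‖c n j‖ * p (y j)
        ≤ ∑ j ∈ Finset.Ico N (n + 1), ‖c n j‖ * δ := by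
          refine Finset.sum_le_sum fun j hj => ?_
          exact mul_le_mul_of_nonneg_left
            (le_of_lt (hN j (Finset.mem_Ico.mp hj).1)) (norm_nonneg _)
      _ = (∑ j ∈ Finset.Ico N (n + 1), ‖c n j‖) * δ := by rw [Finset.sum_mul]
      _ ≤ (∑ j ∈ Finset.range (n + 1), ‖c n j‖) * δ := by
          refine mul_le_mul_of_nonneg_right ?_ (le_of_lt hδ)
          refine Finset.sum_le_sum_of_subset_of_nonneg ?_ fun _ _ _ => norm_nonneg _
          rw [Finset.range_eq_Ico]
          exact Finset.Ico_subset_Ico (Nat.zero_le N) le_rfl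
      _ ≤ K * δ := mul_le_mul_of_nonneg_right (hK n) (le_of_lt hδ)
      _ ≤ (K + 1) * δ := mul_le_mul_of_nonneg_right (by linarith) (le_of_lt hδ)
  have hfin : (K + 1) * δ = ε / 2 := by
    rw [hδdef]
    field_simp
  calc p (∑ j ∈ Finset.range (n + 1), c n j • y j)
      ≤ (∑ j ∈ Finset.range N, ‖c n j‖ * p (y j))
        + ∑ j ∈ Finset.Ico N (n + 1), ‖c n j‖ * p (y j) := by rw [← step2]; exact step1
    _ < ε / 2 + (K + 1) * δ := by
        have := add_lt_add_of_lt_of_le hn step3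
        linarith
    _ = ε := by rw [hfin]; ring

end Helpers
/-- Let `A, B` be probability matrices with `b_{n0} → 0`, such that `(A, B)` satisfies
(*C) and `(ΔA, BΔ)` satisfies (*2C). On a reflexive space (barrelled, and bounded sets
relatively weakly compact), every `A`-ergodic operator is `B`-ergodic. -/
theorem statement13 {E : Type*} [AddCommGroup E] [Module ℂ E] [UniformSpace E]
    [IsUniformAddGroup E] [ContinuousSMul ℂ E] [LocallyConvexSpace ℝ E] [T2Space E]
    [BarrelledSpace ℂ E]
    (hrefl : ∀ s : Set E, Bornology.IsVonNBounded ℂ s →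
      IsCompact (closure (toWeakSpace ℂ E '' s)))
    (A B : Mat) (hA : A.IsProb) (hB : B.IsProb)
    (h0 : Tendsto (fun n => B n 0) atTop (𝓝 (0 : ℂ)))
    (hstarC : PairStarC A B)
    (h2C : PairStar2C (Mat.mul Mat.delta A) (Mat.mul B Mat.delta))
    (T : E →L[ℂ] E) (hT : OpErgodic A T) :
    OpErgodic B T := by
  classical
  haveI : ContinuousSMul ℝ E := IsScalarTower.continuousSMul ℂ
  obtain ⟨P, hP⟩ := hT
  obtain ⟨C, -, hCA, K, hK⟩ := hstarC
  obtain ⟨C', -, hC'A, ⟨⟨K', hK'⟩, hC'col⟩⟩ := h2C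
  obtain ⟨hAtri, -, hAsum⟩ := hA
  obtain ⟨hBtri, -, hBsum⟩ := hB
  set q := gaugeSeminormFamily ℂ E with hqdef
  haveI : LocallyConvexSpace ℂ E := by
    have hR := (locallyConvexSpace_iff_exists_convex_subset_zero ℝ E).mp ‹_›
    refine (locallyConvexSpace_iff_exists_convex_subset_zero ℂ E).mpr fun U hU => ?_
    obtain ⟨S, hS, hSc, hSU⟩ := hR U hU
    refine ⟨S, hS, ?_, hSU⟩
    intro x hx y hy a b ha hb hab
    obtain ⟨a', ha', rfl⟩ := RCLike.nonneg_iff_exists_ofReal.mp ha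
    obtain ⟨b', hb', rfl⟩ := RCLike.nonneg_iff_exists_ofReal.mp hb
    rw [← RCLike.real_smul_eq_coe_smul (K := ℂ), ← RCLike.real_smul_eq_coe_smul (K := ℂ)]
    exact hSc hx hy ha' hb' (by have h := congrArg RCLike.re hab; simpa using h)
  have hq : WithSeminorms q := with_gaugeSeminormFamily
  set F : ℕ → E →L[ℂ] E := fun n => matOpPow B T n with hF
  set G : ℕ → E →L[ℂ] E := fun n => matOpPow A T n with hG
  have hP' : ∀ x : E, Tendsto (fun n => G n x) atTop (𝓝 (P x)) := hP
  have hBG : ∀ (n : ℕ) (x : E), F n x = ∑ j ∈ Finset.range (n + 1), C n j • G j x := by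
    intro n x
    have h := matOpPow_mul_apply C A hAtri T n x
    rw [hCA] at h
    exact h
  have hK0 : (0 : ℝ) ≤ K :=
    le_trans (Finset.sum_nonneg fun _ _ => norm_nonneg _) (hK 0)
  -- the sup seminorms
  have hGbdd : ∀ (i : AbsConvexOpenSets ℂ E) (x : E),
      BddAbove (Set.range fun j => q i (G j x)) := fun i x =>
    (((hq.continuous_seminorm i).tendsto _).comp (hP' x)).bddAbove_range
  have hbddS : ∀ i : AbsConvexOpenSets ℂ E,
      BddAbove (Set.range fun j => (q i).comp (G j).toLinearMap) := fun i =>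
    Seminorm.bddAbove_range_iff.mpr fun x => hGbdd i x
  set pbig : AbsConvexOpenSets ℂ E → Seminorm ℂ E :=
    fun i => ⨆ j, (q i).comp (G j).toLinearMap with hpbigdef
  have hpbig_apply : ∀ i x, pbig i x = ⨆ j, q i (G j x) := by
    intro i x
    have h := congrFun (Seminorm.coe_iSup_eq (hbddS i)) x
    rw [hpbigdef]
    rw [h, iSup_apply]
    rfl
  have hpbig_cont : ∀ i, Continuous (pbig i) := by
    intro i
    have hco : ⇑(pbig i) = ⨆ j, ⇑((q i).comp (G j).toLinearMap) :=
      Seminorm.coe_iSup_eq (hbddS i)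
    have := Seminorm.continuous_iSup (fun j => (q i).comp (G j).toLinearMap)
      (fun j => by
        rw [Seminorm.coe_comp]
        exact (hq.continuous_seminorm i).comp (G j).continuous) (hbddS i)
    rwa [← Seminorm.coe_iSup_eq (hbddS i)] at this
  have hpbig_le : ∀ i j x, q i (G j x) ≤ pbig i x := by
    intro i j x
    rw [hpbig_apply]
    exact le_ciSup (hGbdd i x) j
  -- seminorm bound for F
  have hFbound : ∀ (i : AbsConvexOpenSets ℂ E) (v : E) (n : ℕ),
      q i (F n v) ≤ K * pbig i v := by
    intro i v n
    rw [hBG n v]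
    calc q i (∑ j ∈ Finset.range (n + 1), C n j • G j v)
        ≤ ∑ j ∈ Finset.range (n + 1), q i (C n j • G j v) := seminorm_sum_le _ _ _
      _ = ∑ j ∈ Finset.range (n + 1), ‖C n j‖ * q i (G j v) :=
          Finset.sum_congr rfl fun j _ => map_smul_eq_mul _ _ _
      _ ≤ ∑ j ∈ Finset.range (n + 1), ‖C n j‖ * pbig i v := by
          refine Finset.sum_le_sum fun j _ => ?_
          exact mul_le_mul_of_nonneg_left (hpbig_le i j v) (norm_nonneg _)
      _ = (∑ j ∈ Finset.range (n + 1), ‖C n j‖) * pbig i v := by rw [Finset.sum_mul]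
      _ ≤ K * pbig i v :=
          mul_le_mul_of_nonneg_right (hK n) (apply_nonneg _ _)
  -- BΔ convergence to 0
  have hΔnull : ∀ v : E,
      Tendsto (fun m => matOpPow (Mat.mul Mat.delta A) T m v) atTop (𝓝 0) :=
    fun v => deltaA_tendsto A hAtri T v (P v) (hP' v)
  have hBΔ : ∀ v : E,
      Tendsto (fun n => matOpPow (Mat.mul B Mat.delta) T n v) atTop (𝓝 0) := by
    intro v
    have hkey : ∀ n : ℕ, matOpPow (Mat.mul B Mat.delta) T n v
        = ∑ j ∈ Finset.range (n + 1), C' n j • matOpPow (Mat.mul Mat.delta A) T j v := by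
      intro n
      have h := matOpPow_mul_apply C' (Mat.mul Mat.delta A)
        (mul_lowerTri _ _ hAtri) T n v
      rw [hC'A] at h
      exact h
    rw [show (fun n => matOpPow (Mat.mul B Mat.delta) T n v)
        = fun n => ∑ j ∈ Finset.range (n + 1), C' n j • matOpPow (Mat.mul Mat.delta A) T j v
        from funext hkey]
    exact toeplitz_null hq C' K' hK' hC'col (hΔnull v)
  -- (1-T) F n v → 0
  have hIT : ∀ v : E, Tendsto (fun n => F n v - T (F n v)) atTop (𝓝 0) := by
    intro v
    rw [show (fun n => F n v - T (F n v))
        = fun n => B n 0 • v - T (matOpPow (Mat.mul B Mat.delta) T n v)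
        from funext fun n => bdelta_identity B hBtri T n v]
    have h1 : Tendsto (fun n => B n 0 • v) atTop (𝓝 ((0 : ℂ) • v)) := h0.smul_const v
    have h2 : Tendsto (fun n => T (matOpPow (Mat.mul B Mat.delta) T n v)) atTop (𝓝 (T 0)) :=
      (T.continuous.tendsto 0).comp (hBΔ v)
    simpa using h1.sub h2
  -- F n vanishes asymptotically on range (1-T)
  have hrange0 : ∀ y : E, Tendsto (fun n => F n (y - T y)) atTop (𝓝 0) := by
    intro y
    have heq : ∀ n, F n (y - T y) = F n y - T (F n y) := by
      intro n
      rw [map_sub]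
      congr 1
      rw [hF]
      simp only [matOpPow_apply', map_sum]
      exact Finset.sum_congr rfl fun k _ => by
        simp only [map_smul, ← pow_apply_succ, ← pow_apply_succ']
    rw [show (fun n => F n (y - T y)) = fun n => F n y - T (F n y) from funext heq]
    exact hIT y
  -- the range submodule
  set R : Submodule ℂ E := LinearMap.range ((1 - T : E →L[ℂ] E) : E →ₗ[ℂ] E) with hRdef
  have hmemR : ∀ y : E, y - T y ∈ R := by
    intro y
    exact ⟨y, by simp [ContinuousLinearMap.sub_apply]⟩
  have hR0 : ∀ w ∈ R, Tendsto (fun n => F n w) atTop (𝓝 0) := by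
    rintro w ⟨y, rfl⟩
    have : ((1 - T : E →L[ℂ] E) : E →ₗ[ℂ] E) y = y - T y := by simp [ContinuousLinearMap.sub_apply]
    rw [this]
    exact hrange0 y
  -- main pointwise claim
  have main : ∀ x : E, ∃ z : E, Tendsto (fun n => F n x) atTop (𝓝 z) := by
    intro x
    -- boundedness of the orbit
    have hSbdd : Bornology.IsVonNBounded ℂ (Set.range fun n => F n x) := by
      rw [hq.isVonNBounded_iff_seminorm_bounded]
      intro i
      refine ⟨K * pbig i x + 1, ?_, ?_⟩
      · have := mul_nonneg hK0 (apply_nonneg (pbig i) x)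
        linarith
      · rintro v ⟨n, rfl⟩
        exact lt_of_le_of_lt (hFbound i x n) (by linarith)
    have hcomp := hrefl _ hSbdd
    set ybar : ℕ → WeakSpace ℂ E := fun n => toWeakSpace ℂ E (F n x) with hybar
    have hmem : ∀ n, ybar n ∈ closure (toWeakSpace ℂ E '' Set.range fun n => F n x) :=
      fun n => subset_closure ⟨F n x, ⟨n, rfl⟩, rfl⟩
    have hle : Filter.map ybar atTop ≤ Filter.principal
        (closure (toWeakSpace ℂ E '' Set.range fun n => F n x)) := by
      rw [Filter.le_principal_iff, Filter.mem_map]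
      exact Filter.Eventually.of_forall hmem
    obtain ⟨zbar, -, hz⟩ := hcomp.exists_clusterPt hle
    set z : E := (toWeakSpace ℂ E).symm zbar with hzdef
    have hclus : ∀ φ : E →L[ℂ] ℂ, MapClusterPt (φ z) atTop fun n => φ (F n x) := by
      intro φ
      have hcont : Continuous fun w : WeakSpace ℂ E => φ ((toWeakSpace ℂ E).symm w) :=
        WeakBilin.eval_continuous _ φ
      have hfy : (fun n => φ ((toWeakSpace ℂ E).symm (ybar n))) = fun n => φ (F n x) := by
        funext n
        rw [hybar]
        simp
      have hf : Tendsto (fun w : WeakSpace ℂ E => φ ((toWeakSpace ℂ E).symm w))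
          (Filter.map ybar atTop) (Filter.map (fun n => φ (F n x)) atTop) := by
        rw [Filter.tendsto_map'_iff]
        rw [show ((fun w : WeakSpace ℂ E => φ ((toWeakSpace ℂ E).symm w)) ∘ ybar)
            = fun n => φ (F n x) from hfy]
        exact Filter.tendsto_map
      exact hz.map hcont.continuousAt hf
    -- every functional kills z - T z
    have hφw : ∀ φ : E →L[ℂ] ℂ, φ (z - T z) = 0 := by
      intro φ
      set ψ : E →L[ℂ] ℂ := φ - φ.comp T with hψ
      have h1 : Tendsto (fun n => ψ (F n x)) atTop (𝓝 0) := by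
        have heq : (fun n => ψ (F n x)) = fun n => φ (F n x - T (F n x)) := by
          funext n
          rw [hψ]
          simp [ContinuousLinearMap.sub_apply, map_sub]
        rw [heq]
        have := (φ.continuous.tendsto 0).comp (hIT x)
        simpa [Function.comp_def] using this
      have h2 := hclus ψ
      have h3 : ψ z = 0 := clusterPt_eq_of_tendsto h1 h2
      rw [hψ] at h3
      simp only [ContinuousLinearMap.sub_apply, ContinuousLinearMap.comp_apply] at h3
      rw [map_sub]
      exact h3
    have hTz : T z = z := by
      by_contra hne
      have hne' : (0 : E) ≠ z - T z := by
        intro h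
        exact hne (by rw [eq_comm, sub_eq_zero] at h; exact h.symm)
      obtain ⟨f, hf⟩ := RCLike.geometric_hahn_banach_point_point (𝕜 := ℂ) hne'
      rw [hφw f] at hf
      simp only [map_zero, lt_self_iff_false] at hf
    have hTkz : ∀ k : ℕ, (T ^ k) z = z := by
      intro k
      induction k with
      | zero => simp
      | succ k ih => rw [pow_apply_succ', ih, hTz]
    have hFz : ∀ n, F n z = z := by
      intro n
      rw [hF]
      simp only [matOpPow_apply', hTkz]
      rw [← Finset.sum_smul, hBsum n, one_smul]
    -- x - z lies in the closure of the range of 1 - T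
    have hxz : x - z ∈ closure (R : Set E) := by
      by_contra hxz
      have hconv : Convex ℝ (closure (R : Set E)) := by
        have h1 : Convex ℝ ((R.restrictScalars ℝ : Submodule ℝ E) : Set E) :=
          Submodule.convex _
        have h2 : ((R.restrictScalars ℝ : Submodule ℝ E) : Set E) = (R : Set E) := rfl
        rw [h2] at h1
        exact h1.closure
      obtain ⟨φ, u, hu, hux⟩ := RCLike.geometric_hahn_banach_closed_point (𝕜 := ℂ)
        hconv isClosed_closure hxz
      have hu0 : (0 : ℝ) < u := by
        have := hu 0 (subset_closure R.zero_mem)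
        simpa using this
      have hφR : ∀ v ∈ R, φ v = 0 := by
        intro v hv
        by_contra hφv
        have hns : (0 : ℝ) < Complex.normSq (φ v) := Complex.normSq_pos.mpr hφv
        set c : ℂ := (((u + 1) / Complex.normSq (φ v) : ℝ) : ℂ) * (starRingEnd ℂ) (φ v)
          with hc
        have h1 : φ (c • v) = (((u + 1 : ℝ)) : ℂ) := by
          rw [map_smul, smul_eq_mul, hc]
          rw [mul_assoc, mul_comm ((starRingEnd ℂ) (φ v)) (φ v), Complex.mul_conj]
          rw [← Complex.ofReal_mul]
          congr 1
          field_simp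
        have h2 := hu (c • v) (subset_closure (R.smul_mem c hv))
        rw [h1] at h2
        simp only [RCLike.re_to_complex, Complex.ofReal_re] at h2
        linarith
      have hφT : ∀ y : E, φ (T y) = φ y := by
        intro y
        have := hφR (y - T y) (hmemR y)
        rw [map_sub, sub_eq_zero] at this
        exact this.symm
      have hφpow : ∀ (k : ℕ) (y : E), φ ((T ^ k) y) = φ y := by
        intro k
        induction k with
        | zero => intro y; simp
        | succ k ih =>
          intro y
          rw [pow_apply_succ, ih (T y), hφT]
      have hφF : ∀ n, φ (F n x) = φ x := by
        intro n
        rw [hF]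
        simp only [matOpPow_apply', map_sum, map_smul, hφpow]
        rw [← Finset.sum_smul, hBsum n, one_smul]
      have hφzx : φ z = φ x := by
        refine clusterPt_eq_of_tendsto ?_ (hclus φ)
        rw [show (fun n => φ (F n x)) = fun _ => φ x from funext hφF]
        exact tendsto_const_nhds
      have : φ (x - z) = 0 := by rw [map_sub, hφzx, sub_self]
      rw [this] at hux
      simp only [map_zero] at hux
      linarith
    -- F n (x - z) → 0 by equicontinuity/density
    have hFx0 : Tendsto (fun n => F n (x - z)) atTop (𝓝 0) := by
      rw [hq.tendsto_nhds]
      intro i ε hε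
      set δ : ℝ := ε / (2 * (K + 1)) with hδdef
      have hδ : 0 < δ := by positivity
      have hex : ∃ w ∈ R, pbig i (x - z - w) < δ := by
        have hopen : IsOpen {v : E | pbig i (v - (x - z)) < δ} :=
          isOpen_lt ((hpbig_cont i).comp (continuous_id.sub continuous_const))
            continuous_const
        have hmemq : x - z ∈ {v : E | pbig i (v - (x - z)) < δ} := by
          simp only [Set.mem_setOf_eq, sub_self, map_zero]
          exact hδ
        obtain ⟨w, hw1, hw2⟩ := _root_.mem_closure_iff.mp hxz _ hopen hmemq
        refine ⟨w, hw2, ?_⟩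
        rw [show x - z - w = -(w - (x - z)) by abel, map_neg_eq_map]
        exact hw1
      obtain ⟨w, hwR, hwδ⟩ := hex
      have hwnull := hR0 w hwR
      have hswn : ∀ᶠ n in atTop, q i (F n w) < ε / 2 := by
        have := ((hq.tendsto_nhds (fun n => F n w) 0).mp hwnull) i (ε / 2) (by positivity)
        simpa using this
      filter_upwards [hswn] with n hn
      rw [sub_zero]
      have hsplit : F n (x - z) = F n w + F n (x - z - w) := by
        rw [← map_add]
        congr 1
        abel
      calc q i (F n (x - z)) ≤ q i (F n w) + q i (F n (x - z - w)) := by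
            rw [hsplit]; exact map_add_le_add _ _ _
        _ ≤ q i (F n w) + K * pbig i (x - z - w) :=
            add_le_add_right (hFbound i _ n) _
        _ ≤ q i (F n w) + K * δ := by
            have := mul_le_mul_of_nonneg_left (le_of_lt hwδ) hK0
            linarith
        _ < ε / 2 + (K + 1) * δ := by nlinarith
        _ = ε := by rw [hδdef]; field_simp; ring
    refine ⟨z, ?_⟩
    have hsplit : ∀ n, F n x = F n z + F n (x - z) := by
      intro n
      rw [← map_add]
      congr 1
      abel
    rw [show (fun n => F n x) = fun n => F n z + F n (x - z) from funext hsplit]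
    simp only [hFz]
    simpa using (tendsto_const_nhds : Tendsto (fun _ : ℕ => z) atTop (𝓝 z)).add hFx0
  -- build the limit operator
  choose g hg using main
  have htend : Tendsto (fun n (x : E) => F n x) atTop (𝓝 g) := tendsto_pi_nhds.mpr hg
  exact ⟨hq.continuousLinearMapOfTendsto F htend, hg⟩
end
end

section
/- Let A and B be probability matrices with lim_{n→∞} b_{n0} = 0. Assume the pair (A,B) satisfies (*C) and the pair (A, BΔ) satisfies (*3C). If E is a reflexive locally convex Hausdorff topological vector space over ℂ, then every A-bounded continuous linear operator on E is B-ergodic. -/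
open Filter Finset Topology ZeroAtInfty
open scoped ENNReal ComplexOrder

noncomputable section

section AuxProof
open Pointwise Uniformity

variable {E : Type*} [AddCommGroup E] [Module ℂ E] [UniformSpace E]
  [IsUniformAddGroup E] [ContinuousSMul ℂ E]

/-- Absolutely convex combination lemma. -/
lemma absconvex_sum_mem {U : Set E} (hb : Balanced ℂ U) (hc : Convex ℝ U) (h0 : (0:E) ∈ U)
    {ι : Type*} (s : Finset ι) (c : ι → ℂ) (x : ι → E)
    (hx : ∀ i ∈ s, x i ∈ U) (hs : ∑ i ∈ s, ‖c i‖ ≤ 1) :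
    (∑ i ∈ s, c i • x i) ∈ U := by
  classical
  set t : ℝ := ∑ i ∈ s, ‖c i‖ with ht
  have htnn : 0 ≤ t := Finset.sum_nonneg fun i _ => norm_nonneg _
  rcases eq_or_lt_of_le htnn with h | h
  · have hz : ∀ i ∈ s, c i = 0 := by
      intro i hi
      have := (Finset.sum_eq_zero_iff_of_nonneg (fun i _ => norm_nonneg (c i))).mp h.symm i hi
      simpa using this
    rw [Finset.sum_congr rfl fun i hi => by rw [hz i hi, zero_smul]]
    simpa using h0
  · set u : ι → E := fun i => if c i = 0 then 0 else (c i / (‖c i‖ : ℂ)) • x i with hu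
    have hus : ∀ i ∈ s, u i ∈ U := by
      intro i hi
      by_cases h' : c i = 0
      · simpa [hu, h'] using h0
      · simp only [hu, h', if_false]
        refine hb.smul_mem ?_ (hx i hi)
        rw [norm_div, Complex.norm_real, norm_norm, div_le_one (norm_pos_iff.mpr h')]
    have hrepr : ∀ i, c i • x i = ‖c i‖ • u i := by
      intro i
      by_cases h' : c i = 0
      · simp [hu, h']
      · simp only [hu, h', if_false]
        have hne : ((‖c i‖ : ℝ) : ℂ) ≠ 0 := by
          simpa using norm_ne_zero_iff.mpr h'
        rw [← smul_assoc]
        congr 1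
        rw [Complex.real_smul, mul_comm, div_mul_cancel₀ _ hne]
    rw [Finset.sum_congr rfl fun i _ => hrepr i]
    have h1 : ∑ i ∈ s, ‖c i‖ • u i = t • ∑ i ∈ s, (t⁻¹ * ‖c i‖) • u i := by
      rw [Finset.smul_sum]
      refine Finset.sum_congr rfl fun i hi => ?_
      rw [smul_smul, mul_inv_cancel_left₀ h.ne']
    rw [h1]
    have hz : (∑ i ∈ s, (t⁻¹ * ‖c i‖) • u i) ∈ U := by
      refine hc.sum_mem (fun i hi => by positivity) ?_ hus
      rw [← Finset.mul_sum, ← ht, inv_mul_cancel₀ h.ne']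
    have := hc hz h0 (le_of_lt h) (by linarith : (0:ℝ) ≤ 1 - t) (by ring)
    simpa using this

lemma equicont_extract {ι : Type*} {S : ι → E →L[ℂ] E}
    (h : Equicontinuous fun i => ⇑(S i)) {V : Set E} (hV : V ∈ 𝓝 (0:E)) :
    ∃ U ∈ 𝓝 (0:E), ∀ i, ∀ x ∈ U, S i x ∈ V := by
  have hU : {p : E × E | p.2 - p.1 ∈ V} ∈ uniformity E := by
    rw [uniformity_eq_comap_nhds_zero]
    exact Filter.preimage_mem_comap hV
  have h2 := h 0 _ hU
  rw [Filter.eventually_iff] at h2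
  refine ⟨_, h2, fun i x hx => ?_⟩
  have := hx i
  simpa using this

lemma equicont_construct {ι : Type*} {S : ι → E →L[ℂ] E}
    (h : ∀ V ∈ 𝓝 (0:E), ∃ U ∈ 𝓝 (0:E), ∀ i, ∀ x ∈ U, S i x ∈ V) :
    Equicontinuous fun i => ⇑(S i) := by
  apply equicontinuous_of_equicontinuousAt_zero S
  intro U hU
  rw [uniformity_eq_comap_nhds_zero] at hU
  obtain ⟨V, hV, hVU⟩ := Filter.mem_comap.mp hU
  obtain ⟨W, hW, hWV⟩ := h V hV
  filter_upwards [hW] with x hx i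
  apply hVU
  simpa using hWV i x hx

lemma equicont_pointwise_bounded {ι : Type*} {S : ι → E →L[ℂ] E}
    (h : Equicontinuous fun i => ⇑(S i)) (x : E) :
    Bornology.IsVonNBounded ℂ (Set.range fun i => S i x) := by
  intro V hV
  obtain ⟨U, hU, hSU⟩ := equicont_extract h hV
  have habs : Absorbs ℂ U {x} := absorbent_nhds_zero hU x
  obtain ⟨r, hr⟩ := absorbs_iff_norm.mp habs
  refine absorbs_iff_norm.mpr ⟨r, fun a ha => ?_⟩
  have hx : x ∈ a • U := hr a ha rfl
  obtain ⟨u, hu, hux⟩ := hx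
  rintro - ⟨i, rfl⟩
  show S i x ∈ a • V
  have hSx : S i x = a • S i u := by rw [← hux]; simp
  rw [hSx]
  exact Set.smul_mem_smul_set (hSU i u hu)

variable [LocallyConvexSpace ℝ E]

instance locallyConvexSpace_complex_aux : LocallyConvexSpace ℂ E :=
  LocallyConvexSpace.ofBasisZero ℂ E (fun s => s) (fun s => s ∈ 𝓝 (0:E) ∧ Convex ℝ s)
    (LocallyConvexSpace.convex_basis_zero ℝ E)
    (fun s hs => convex_RCLike_iff_convex_real.mpr hs.2)

lemma tendsto_comb_zero (C : Mat)
    (hC : Tendsto C.rowSum atTop (𝓝 (0:ℝ))) {v : ℕ → E}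
    (hv : Bornology.IsVonNBounded ℂ (Set.range v)) :
    Tendsto (fun n => ∑ i ∈ Finset.range (n+1), C n i • v i) atTop (𝓝 (0:E)) := by
  rw [(nhds_hasBasis_absConvex ℂ E).tendsto_right_iff]
  rintro V ⟨hV, hVb, hVc⟩
  have hV0 : (0:E) ∈ V := mem_of_mem_nhds hV
  obtain ⟨r, hr⟩ := absorbs_iff_norm.mp (hv hV)
  set a : ℂ := ((max r 1 : ℝ) : ℂ) with ha
  have hM1 : (0:ℝ) < max r 1 := lt_of_lt_of_le zero_lt_one (le_max_right r 1)
  have hna : ‖a‖ = max r 1 := by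
    rw [ha, Complex.norm_real, Real.norm_eq_abs, abs_of_pos hM1]
  have ha0 : a ≠ 0 := by
    intro h
    rw [h, norm_zero] at hna
    linarith
  have hsub : Set.range v ⊆ a • V := hr a (by rw [hna]; exact le_max_left r 1)
  have hpos : (0:ℝ) < ‖a‖⁻¹ := inv_pos.mpr (hna ▸ hM1)
  filter_upwards [hC.eventually (gt_mem_nhds hpos)] with n hn
  have hmem : ∀ i, a⁻¹ • v i ∈ V := by
    intro i
    obtain ⟨u, hu, huv⟩ := hsub ⟨i, rfl⟩
    rw [← huv, smul_smul, inv_mul_cancel₀ ha0, one_smul]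
    exact hu
  have : (∑ i ∈ Finset.range (n+1), C n i • v i)
      = ∑ i ∈ Finset.range (n+1), (C n i * a) • (a⁻¹ • v i) := by
    refine Finset.sum_congr rfl fun i _ => ?_
    rw [smul_smul, mul_assoc, mul_inv_cancel₀ ha0, mul_one]
  rw [this]
  refine absconvex_sum_mem hVb (convex_RCLike_iff_convex_real.mp hVc) hV0 _ _ _ (fun i _ => hmem i) ?_
  have : ∑ i ∈ Finset.range (n+1), ‖C n i * a‖ = C.rowSum n * ‖a‖ := by
    rw [Mat.rowSum, Finset.sum_mul]
    exact Finset.sum_congr rfl fun i _ => by rw [norm_mul]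
  rw [this]
  have h1 : C.rowSum n * ‖a‖ ≤ ‖a‖⁻¹ * ‖a‖ := by
    apply mul_le_mul_of_nonneg_right (le_of_lt hn) (norm_nonneg _)
  calc C.rowSum n * ‖a‖ ≤ ‖a‖⁻¹ * ‖a‖ := h1
    _ = 1 := inv_mul_cancel₀ (norm_ne_zero_iff.mpr ha0)

lemma equicont_comb {S : ℕ → E →L[ℂ] E}
    (hS : Equicontinuous fun n => ⇑(S n)) (C : Mat) (K : ℝ)
    (hK : ∀ n, C.rowSum n ≤ K) :
    Equicontinuous fun n => ⇑(∑ i ∈ Finset.range (n+1), C n i • S i) := by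
  apply equicont_construct
  intro V hV
  set M : ℝ := max K 1 with hM
  have hMpos : 0 < M := lt_of_lt_of_le one_pos (le_max_right _ _)
  have hMc : ((M : ℝ) : ℂ) ≠ 0 := by
    simpa using hMpos.ne'
  have hMV : (((M : ℝ) : ℂ))⁻¹ • V ∈ 𝓝 (0:E) :=
    (set_smul_mem_nhds_zero_iff (inv_ne_zero hMc)).mpr hV
  obtain ⟨s, ⟨hs𝓝, hsb, hsc⟩, hsub⟩ := (nhds_hasBasis_absConvex ℂ E).mem_iff.mp hMV
  obtain ⟨U, hU, hSU⟩ := equicont_extract hS hs𝓝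
  refine ⟨U, hU, fun n x hx => ?_⟩
  have happ : (∑ i ∈ Finset.range (n+1), C n i • S i) x
      = ∑ i ∈ Finset.range (n+1), C n i • (S i x) := by
    rw [ContinuousLinearMap.coe_sum', Finset.sum_apply]
    exact Finset.sum_congr rfl fun i _ => rfl
  rw [happ]
  have h1 : ∑ i ∈ Finset.range (n+1), C n i • (S i x)
      = ((M:ℝ):ℂ) • ∑ i ∈ Finset.range (n+1), (C n i / ((M:ℝ):ℂ)) • (S i x) := by
    rw [Finset.smul_sum]
    refine Finset.sum_congr rfl fun i _ => ?_
    rw [smul_smul, mul_div_cancel₀ _ hMc]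
  rw [h1]
  have hzin : (∑ i ∈ Finset.range (n+1), (C n i / ((M:ℝ):ℂ)) • (S i x)) ∈ s := by
    refine absconvex_sum_mem hsb (convex_RCLike_iff_convex_real.mp hsc) (mem_of_mem_nhds hs𝓝) _ _ _
      (fun i _ => hSU i x hx) ?_
    have : ∑ i ∈ Finset.range (n+1), ‖C n i / ((M:ℝ):ℂ)‖ = C.rowSum n / M := by
      rw [Mat.rowSum, Finset.sum_div]
      refine Finset.sum_congr rfl fun i _ => ?_
      rw [norm_div]
      congr 1
      rw [Complex.norm_real, Real.norm_eq_abs, abs_of_pos hMpos]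
    rw [this, div_le_one hMpos]
    exact le_trans (hK n) (le_max_left _ _)
  have := Set.smul_mem_smul_set (a := ((M:ℝ):ℂ)) (hsub hzin)
  rw [smul_smul, mul_inv_cancel₀ hMc, one_smul] at this
  exact this

lemma matOp_mul_eq (C A : Mat) (hA : A.LowerTri) (T : ℕ → E →L[ℂ] E) (n : ℕ) :
    matOp (Mat.mul C A) T n = ∑ i ∈ Finset.range (n+1), C n i • matOp A T i := by
  have h1 : ∀ j ∈ Finset.range (n+1), matOp A T j = ∑ k ∈ Finset.range (n+1), A j k • T k := by
    intro j hj
    rw [Finset.mem_range, Nat.lt_succ_iff] at hj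
    refine Finset.sum_subset (Finset.range_subset_range.mpr (by omega)) ?_
    intro k hk hk'
    rw [Finset.mem_range, Nat.lt_succ_iff, not_le] at hk'
    rw [hA j k hk', zero_smul]
  calc matOp (Mat.mul C A) T n
      = ∑ k ∈ Finset.range (n+1), (∑ j ∈ Finset.range (n+1), C n j * A j k) • T k := rfl
    _ = ∑ k ∈ Finset.range (n+1), ∑ j ∈ Finset.range (n+1), (C n j * A j k) • T k := by
        simp_rw [Finset.sum_smul]
    _ = ∑ j ∈ Finset.range (n+1), ∑ k ∈ Finset.range (n+1), (C n j * A j k) • T k :=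
        Finset.sum_comm
    _ = ∑ j ∈ Finset.range (n+1), C n j • ∑ k ∈ Finset.range (n+1), A j k • T k := by
        simp_rw [Finset.smul_sum, mul_smul]
    _ = ∑ j ∈ Finset.range (n+1), C n j • matOp A T j := by
        refine Finset.sum_congr rfl fun j hj => ?_
        rw [h1 j hj]

lemma matOp_apply (Cm : Mat) (Tf : ℕ → E →L[ℂ] E) (n : ℕ) (v : E) :
    matOp Cm Tf n v = ∑ i ∈ Finset.range (n+1), Cm n i • Tf i v := by
  rw [matOp, ContinuousLinearMap.coe_sum', Finset.sum_apply]
  exact Finset.sum_congr rfl fun i _ => rfl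

lemma mul_delta_entry (B : Mat) (hB : B.LowerTri) (n k : ℕ) (hk : k ≤ n) :
    Mat.mul B Mat.delta n k = B n k - B n (k+1) := by
  unfold Mat.mul Mat.delta
  simp_rw [mul_sub, Finset.sum_sub_distrib, mul_ite, mul_one, mul_zero]
  congr 1
  · rw [Finset.sum_ite_eq' (Finset.range (n+1)) k (fun j => B n j)]
    simp [Nat.lt_succ_iff, hk]
  · rw [Finset.sum_ite_eq' (Finset.range (n+1)) (k+1) (fun j => B n j)]
    by_cases h : k + 1 ∈ Finset.range (n+1)
    · simp [h]
    · rw [if_neg h]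
      rw [Finset.mem_range, Nat.lt_succ_iff, not_le] at h
      rw [hB n (k+1) h]

lemma sum_shift (n : ℕ) (b : ℕ → ℂ) (hb : b (n+1) = 0) (f : ℕ → E) :
    ∑ k ∈ Finset.range (n+1), b k • (f (k+1) - f k)
      = (∑ k ∈ Finset.range (n+1), (b k - b (k+1)) • f (k+1)) - b 0 • f 0 := by
  simp only [smul_sub, sub_smul, Finset.sum_sub_distrib]
  have h2 : ∑ k ∈ Finset.range (n+1), b k • f k
      = (∑ k ∈ Finset.range (n+1), b (k+1) • f (k+1)) + b 0 • f 0 := by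
    rw [Finset.sum_range_succ' (fun k => b k • f k) n,
      Finset.sum_range_succ (fun k => b (k+1) • f (k+1)) n, hb, zero_smul, add_zero]
  rw [h2]
  abel

lemma key_identity (B : Mat) (hB : B.LowerTri) (T : E →L[ℂ] E) (n : ℕ) (x : E) :
    matOp B (fun i => T ^ i) n (T x - x)
      = T (matOp (Mat.mul B Mat.delta) (fun i => T ^ i) n x) - B n 0 • x := by
  have hf : ∀ k : ℕ, (T ^ k) (T x) = (T ^ (k+1)) x := fun k => by
    rw [pow_succ]; rfl
  have hf' : ∀ k : ℕ, T ((T ^ k) x) = (T ^ (k+1)) x := fun k => by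
    rw [pow_succ']; rfl
  have e1 : matOp B (fun i => T ^ i) n (T x - x)
      = ∑ k ∈ Finset.range (n+1), B n k • ((T^(k+1)) x - (T^k) x) := by
    rw [matOp_apply]
    refine Finset.sum_congr rfl fun k _ => ?_
    rw [map_sub, hf k]
  have e2 : T (matOp (Mat.mul B Mat.delta) (fun i => T ^ i) n x)
      = ∑ k ∈ Finset.range (n+1), (B n k - B n (k+1)) • ((T^(k+1)) x) := by
    rw [matOp_apply, map_sum]
    refine Finset.sum_congr rfl fun k hk => ?_
    rw [Finset.mem_range, Nat.lt_succ_iff] at hk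
    rw [map_smul, mul_delta_entry B hB n k hk, hf' k]
  rw [e1, e2, sum_shift n (B n) (hB n (n+1) (by omega)) (fun k => (T^k) x)]
  have : ((T:E →L[ℂ] E)^0) x = x := by simp
  rw [this]

lemma matOp_fixed (B : Mat) (hBrow : ∀ n, (∑ i ∈ Finset.range (n+1), B n i) = 1)
    (T : E →L[ℂ] E) {y : E} (hy : T y = y) (n : ℕ) :
    matOp B (fun i => T ^ i) n y = y := by
  have hpow : ∀ i : ℕ, (T ^ i) y = y := by
    intro i
    induction i with
    | zero => simp
    | succ k ih =>
      rw [pow_succ, ContinuousLinearMap.mul_apply, hy, ih]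
  rw [matOp_apply]
  simp only [hpow]
  rw [← Finset.sum_smul, hBrow n, one_smul]

lemma sub_matOp_mem (B : Mat) (hBrow : ∀ n, (∑ i ∈ Finset.range (n+1), B n i) = 1)
    (T : E →L[ℂ] E) (x : E) (n : ℕ) :
    ∃ w : E, x - matOp B (fun i => T ^ i) n x = T w - w := by
  refine ⟨-∑ i ∈ Finset.range (n+1), B n i • (∑ j ∈ Finset.range i, (T^j) x), ?_⟩
  have htel : ∀ i : ℕ, T (∑ j ∈ Finset.range i, (T^j) x) - (∑ j ∈ Finset.range i, (T^j) x)
      = (T^i) x - x := by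
    intro i
    rw [map_sum]
    have h1 : ∀ j ∈ Finset.range i, T ((T^j) x) = (T^(j+1)) x := fun j _ => by
      rw [pow_succ']; rfl
    rw [Finset.sum_congr rfl h1, ← Finset.sum_sub_distrib,
      Finset.sum_range_sub (fun j => (T^j) x) i]
    simp
  have hmain : T (-(∑ i ∈ Finset.range (n+1), B n i • ∑ j ∈ Finset.range i, (T^j) x)) -
      -(∑ i ∈ Finset.range (n+1), B n i • ∑ j ∈ Finset.range i, (T^j) x)
      = ∑ i ∈ Finset.range (n+1), B n i • (x - (T^i) x) := by
    rw [map_neg, sub_neg_eq_add, neg_add_eq_sub, map_sum]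
    simp only [map_smul]
    rw [← Finset.sum_sub_distrib]
    refine Finset.sum_congr rfl fun i _ => ?_
    rw [← smul_sub]
    congr 1
    have := htel i
    have h2 : (∑ j ∈ Finset.range i, (T^j) x) - T (∑ j ∈ Finset.range i, (T^j) x)
        = x - (T^i) x := by
      rw [← neg_sub, this, neg_sub]
    exact h2
  rw [hmain]
  simp only [smul_sub]
  rw [Finset.sum_sub_distrib, ← Finset.sum_smul, hBrow n, one_smul]
  congr 1
  rw [matOp_apply]

lemma tendsto_zero_closure {F : ℕ → E →L[ℂ] E} (hF : Equicontinuous fun n => ⇑(F n))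
    {R : Set E} (hR : ∀ w ∈ R, Tendsto (fun n => F n w) atTop (𝓝 (0:E)))
    {z : E} (hz : z ∈ closure R) : Tendsto (fun n => F n z) atTop (𝓝 (0:E)) := by
  rw [Filter.tendsto_def]
  intro V hV
  obtain ⟨W, hW, hWW⟩ := exists_nhds_zero_half hV
  obtain ⟨U, hU, hFU⟩ := equicont_extract hF hW
  have hnz : {y : E | z - y ∈ U} ∈ 𝓝 z := by
    have hcont : Continuous fun y : E => z - y := continuous_const.sub continuous_id
    have := hcont.continuousAt (x := z) |>.preimage_mem_nhds (by rwa [sub_self])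
    exact this
  obtain ⟨w, hw⟩ := mem_closure_iff_nhds.mp hz _ hnz
  have hconv := hR w hw.2
  rw [Filter.tendsto_def] at hconv
  filter_upwards [hconv W hW] with n hn
  have heq : F n z = F n (z - w) + F n w := by
    rw [← map_add]
    congr 1
    abel
  rw [Set.mem_preimage, heq]
  exact hWW _ (hFU n _ hw.1) _ hn

lemma mapClusterPt_eq_of_tendsto {X : Type*} [TopologicalSpace X] [T2Space X] {u : ℕ → X}
    {a b : X} (h : MapClusterPt a atTop u) (h' : Tendsto u atTop (𝓝 b)) : a = b :=
  eq_of_nhds_neBot (h.clusterPt.mono h')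

end AuxProof

/-- Let `A, B` be probability matrices with `b_{n0} → 0`, such that `(A, B)` satisfies
(*C) and `(A, BΔ)` satisfies (*3C). On a reflexive space (barrelled, and bounded sets
relatively weakly compact), every `A`-bounded operator is `B`-ergodic. -/
theorem statement14 {E : Type*} [AddCommGroup E] [Module ℂ E] [UniformSpace E]
    [IsUniformAddGroup E] [ContinuousSMul ℂ E] [LocallyConvexSpace ℝ E] [T2Space E]
    [BarrelledSpace ℂ E]
    (hrefl : ∀ s : Set E, Bornology.IsVonNBounded ℂ s →
      IsCompact (closure (toWeakSpace ℂ E '' s)))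
    (A B : Mat) (hA : A.IsProb) (hB : B.IsProb)
    (h0 : Tendsto (fun n => B n 0) atTop (𝓝 (0 : ℂ)))
    (hstarC : PairStarC A B)
    (h3C : PairStar3C A (Mat.mul B Mat.delta))
    (T : E →L[ℂ] E) (hT : OpBounded A T) :
    OpErgodic B T := by
  classical
  obtain ⟨C, hCt, hCA, K, hK⟩ := hstarC
  obtain ⟨C', hC't, hC'A, h3⟩ := h3C
  have hSequi : Equicontinuous fun n => ⇑(matOp A (fun i => T ^ i) n) := hT
  have hFrepr : ∀ n, matOp B (fun i => T ^ i) n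
      = ∑ i ∈ Finset.range (n+1), C n i • matOp A (fun j => T ^ j) i := by
    intro n
    rw [← hCA, matOp_mul_eq C A hA.1]
  have hFequi : Equicontinuous fun n => ⇑(matOp B (fun i => T ^ i) n) := by
    simp only [hFrepr]
    exact equicont_comb hSequi C K hK
  -- Null sequences on the range of (T - 1)
  have hnull : ∀ v : E, Tendsto (fun n => matOp B (fun i => T ^ i) n (T v - v)) atTop
      (𝓝 (0:E)) := by
    intro v
    have hb := equicont_pointwise_bounded hSequi v
    have hGv : Tendsto (fun n => matOp (Mat.mul B Mat.delta) (fun i => T ^ i) n v) atTop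
        (𝓝 (0:E)) := by
      have h4 := tendsto_comb_zero C' h3 (v := fun i => matOp A (fun j => T ^ j) i v) hb
      have hrepr : ∀ n, matOp (Mat.mul B Mat.delta) (fun i => T ^ i) n v
          = ∑ i ∈ Finset.range (n+1), C' n i • (matOp A (fun j => T ^ j) i v) := by
        intro n
        rw [show matOp (Mat.mul B Mat.delta) (fun i => T ^ i) n
            = matOp (Mat.mul C' A) (fun i => T ^ i) n from by rw [hC'A]]
        rw [matOp_mul_eq C' A hA.1, ContinuousLinearMap.coe_sum', Finset.sum_apply]
        exact Finset.sum_congr rfl fun i _ => rfl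
      simp only [hrepr]
      exact h4
    have hid : ∀ n, matOp B (fun i => T ^ i) n (T v - v)
        = T (matOp (Mat.mul B Mat.delta) (fun i => T ^ i) n v) - B n 0 • v := fun n =>
      key_identity B hB.1 T n v
    simp only [hid]
    have h1 : Tendsto (fun n => T (matOp (Mat.mul B Mat.delta) (fun i => T ^ i) n v)) atTop
        (𝓝 (0:E)) := by
      have := (T.continuous.tendsto 0).comp hGv
      simpa [Function.comp_def] using this
    have h2 : Tendsto (fun n => B n 0 • v) atTop (𝓝 (0:E)) := by
      have := h0.smul_const v
      simpa using this
    simpa using h1.sub h2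
  set Rset : Set E := Set.range (fun w => T w - w) with hRset
  have hRnull : ∀ w ∈ Rset, Tendsto (fun n => matOp B (fun i => T ^ i) n w) atTop (𝓝 (0:E)) := by
    rintro - ⟨w, rfl⟩
    exact hnull w
  have hRconv : Convex ℝ Rset := by
    rintro - ⟨a, rfl⟩ - ⟨b, rfl⟩ p q hp hq hpq
    refine ⟨p • a + q • b, ?_⟩
    simp only [map_add, ContinuousLinearMap.map_smul_of_tower, smul_sub]
    abel
  have key : ∀ x : E, ∃ yy : E,
      Tendsto (fun n => matOp B (fun i => T ^ i) n x) atTop (𝓝 yy) := by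
    intro x
    have hbdd : Bornology.IsVonNBounded ℂ
        (Set.range fun n => matOp B (fun i => T ^ i) n x) :=
      equicont_pointwise_bounded hFequi x
    have hcomp := hrefl _ hbdd
    have hsub : Filter.map (fun n => toWeakSpace ℂ E (matOp B (fun i => T ^ i) n x)) atTop
        ≤ 𝓟 (closure (toWeakSpace ℂ E ''
          (Set.range fun n => matOp B (fun i => T ^ i) n x))) := by
      rw [Filter.le_principal_iff, Filter.mem_map]
      exact Filter.Eventually.of_forall fun n =>
        subset_closure (Set.mem_image_of_mem _ ⟨n, rfl⟩)
    obtain ⟨y_w, hy_wK, hy_w⟩ := hcomp.exists_mapClusterPt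
      (u := fun n => toWeakSpace ℂ E (matOp B (fun i => T ^ i) n x)) hsub
    set y : E := (toWeakSpace ℂ E).symm y_w with hy
    have hcommT : ∀ n (v : E), T (matOp B (fun i => T ^ i) n v)
        = matOp B (fun i => T ^ i) n (T v) := by
      intro n v
      rw [matOp_apply, matOp_apply, map_sum]
      refine Finset.sum_congr rfl fun k _ => ?_
      rw [map_smul]
      congr 1
      rw [← ContinuousLinearMap.mul_apply, ← ContinuousLinearMap.mul_apply, ← pow_succ',
        ← pow_succ]
    -- T y = y
    have hTy : T y = y := by
      by_contra hne
      have hz : T y - y ≠ 0 := sub_ne_zero.mpr hne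
      obtain ⟨f, hf⟩ := RCLike.geometric_hahn_banach_point_point (𝕜 := ℂ) (x := (0:E))
        (y := T y - y) (Ne.symm hz)
      rw [map_zero, map_zero] at hf
      set g : E →L[ℂ] ℂ := f.comp T - f with hg
      let f' : WeakSpace ℂ E →L[ℂ] ℂ :=
        { toLinearMap := (g : E →ₗ[ℂ] ℂ).comp ((toWeakSpace ℂ E).symm : WeakSpace ℂ E →ₗ[ℂ] E)
          cont := by exact WeakBilin.eval_continuous (topDualPairing ℂ E).flip g }
      have hcl2 : MapClusterPt (f' y_w) atTop
          (f' ∘ fun n => toWeakSpace ℂ E (matOp B (fun i => T ^ i) n x)) :=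
        hy_w.continuousAt_comp f'.continuous.continuousAt
      have hseq : ∀ n, f' (toWeakSpace ℂ E (matOp B (fun i => T ^ i) n x))
          = f (matOp B (fun i => T ^ i) n (T x - x)) := by
        intro n
        show g (matOp B (fun i => T ^ i) n x) = _
        rw [hg]
        simp only [ContinuousLinearMap.sub_apply, ContinuousLinearMap.comp_apply]
        rw [← map_sub, hcommT n x, ← map_sub]
      have hlim : Tendsto
          (f' ∘ fun n => toWeakSpace ℂ E (matOp B (fun i => T ^ i) n x)) atTop (𝓝 (0:ℂ)) := by
        have h5 : (f' ∘ fun n => toWeakSpace ℂ E (matOp B (fun i => T ^ i) n x))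
            = fun n => f (matOp B (fun i => T ^ i) n (T x - x)) := funext fun n => hseq n
        rw [h5]
        have := (f.continuous.tendsto 0).comp (hnull x)
        simpa only [Function.comp_def, map_zero] using this
      have hzero : f' y_w = 0 := mapClusterPt_eq_of_tendsto hcl2 hlim
      have hval : f' y_w = f (T y - y) := by
        show g ((toWeakSpace ℂ E).symm y_w) = _
        rw [hg]
        simp only [ContinuousLinearMap.sub_apply, ContinuousLinearMap.comp_apply]
        rw [← map_sub]
      rw [hval] at hzero
      rw [hzero] at hf
      simp at hf
    -- x - y is in the closure of Rset
    have hxy : x - y ∈ closure Rset := by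
      have hψ : Continuous fun u : WeakSpace ℂ E => toWeakSpace ℂ E x - u :=
        continuous_const.sub continuous_id
      have hcl3 : MapClusterPt (toWeakSpace ℂ E x - y_w) atTop
          ((fun u : WeakSpace ℂ E => toWeakSpace ℂ E x - u) ∘
            fun n => toWeakSpace ℂ E (matOp B (fun i => T ^ i) n x)) :=
        hy_w.continuousAt_comp hψ.continuousAt
      have hsub2 : Filter.map
          ((fun u : WeakSpace ℂ E => toWeakSpace ℂ E x - u) ∘
            fun n => toWeakSpace ℂ E (matOp B (fun i => T ^ i) n x)) atTop
          ≤ 𝓟 (toWeakSpace ℂ E '' Rset) := by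
        rw [Filter.le_principal_iff, Filter.mem_map]
        refine Filter.Eventually.of_forall fun n => ?_
        obtain ⟨w, hw⟩ := sub_matOp_mem B hB.2.2 T x n
        exact ⟨x - matOp B (fun i => T ^ i) n x, ⟨w, hw.symm⟩, by simp [map_sub]⟩
      have hmemcl : toWeakSpace ℂ E x - y_w ∈ closure (toWeakSpace ℂ E '' Rset) :=
        mem_closure_iff_clusterPt.mpr (hcl3.clusterPt.mono hsub2)
      have hclos := hRconv.toWeakSpace_closure (𝕜 := ℂ)
      rw [← hclos] at hmemcl
      obtain ⟨z, hzcl, hzeq⟩ := hmemcl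
      have : z = x - y := by
        apply (toWeakSpace ℂ E).injective
        rw [hzeq, map_sub, hy, LinearEquiv.apply_symm_apply]
      rwa [this] at hzcl
    have hcv : Tendsto (fun n => matOp B (fun i => T ^ i) n (x - y)) atTop (𝓝 (0:E)) :=
      tendsto_zero_closure hFequi hRnull hxy
    refine ⟨y, ?_⟩
    have hFy : ∀ n, matOp B (fun i => T ^ i) n y = y := fun n =>
      matOp_fixed B hB.2.2 T hTy n
    have hdecomp : ∀ n, matOp B (fun i => T ^ i) n x
        = y + matOp B (fun i => T ^ i) n (x - y) := by
      intro n
      rw [map_sub, hFy n]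
      abel
    simp only [hdecomp]
    simpa using tendsto_const_nhds.add hcv
  choose P0 hP0 using key
  have hPadd : ∀ a b, P0 (a + b) = P0 a + P0 b := fun a b =>
    tendsto_nhds_unique (hP0 (a+b)) (by simp only [map_add]; exact (hP0 a).add (hP0 b))
  have hPsmul : ∀ (c : ℂ) (a : E), P0 (c • a) = c • P0 a := fun c a =>
    tendsto_nhds_unique (hP0 (c • a)) (by simp only [map_smul]; exact (hP0 a).const_smul c)
  have hP0zero : P0 0 = 0 :=
    tendsto_nhds_unique (hP0 0) (by simp only [map_zero]; exact tendsto_const_nhds)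
  have hmono : ∀ V ∈ 𝓝 (0:E), P0 ⁻¹' V ∈ 𝓝 (0:E) := by
    intro V hV
    obtain ⟨W, hW, hWc, hWV⟩ := exists_mem_nhds_isClosed_subset hV
    obtain ⟨U, hU, hFU⟩ := equicont_extract hFequi hW
    refine Filter.mem_of_superset hU fun u hu => hWV ?_
    exact hWc.mem_of_tendsto (hP0 u) (Filter.Eventually.of_forall fun n => hFU n u hu)
  have hPcont : Continuous P0 := by
    let Ph : E →+ E := AddMonoidHom.mk' P0 hPadd
    have hcontAt : ContinuousAt Ph 0 := by
      show Tendsto P0 (𝓝 0) (𝓝 (P0 0))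
      rw [hP0zero, Filter.tendsto_def]
      exact fun V hV => hmono V hV
    exact continuous_of_continuousAt_zero Ph hcontAt
  exact ⟨{ toLinearMap := { toFun := P0, map_add' := hPadd, map_smul' := hPsmul },
           cont := hPcont }, hP0⟩
end
end

section
/- Let p, q ∈ ℝ satisfy q ≤ p or −1 < p < q. Then the pair (M_p, M_q) of probability matrices satisfies property (*C); that is, for the lower triangular matrix C = M_q M_p^{-1} one has sup_n Σ_i |c_{ni}| < ∞. Moreover, when q ≤ p the row sums Σ_i |c_{ni}| equal 1 for every n, and when −1 < p < q they equal 2 n^{q−p} S(n,p)/S(n,q) − 1 and are bounded. -/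
open Filter Finset Topology ZeroAtInfty
open scoped ENNReal ComplexOrder

noncomputable section

lemma Sp_pos (p : ℝ) {n : ℕ} (hn : 0 < n) : 0 < Sp p n := by
  apply Finset.sum_pos
  · intro i _; positivity
  · exact Finset.nonempty_range_iff.mpr hn.ne'
lemma Sp_nonneg (p : ℝ) (n : ℕ) : 0 ≤ Sp p n := by
  apply Finset.sum_nonneg; intro i _; positivity


lemma Sp_succ (p : ℝ) (n : ℕ) : Sp p (n + 1) = Sp p n + ((n : ℝ) + 1) ^ p :=
  Finset.sum_range_succ _ _

/-- Abel summation / telescoping identity. -/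
lemma abel_id (p r : ℝ) (n : ℕ) :
    ∑ k ∈ Finset.range n, Sp p (k + 1) * (((k : ℝ) + 1) ^ r - ((k : ℝ) + 2) ^ r)
      + ((n : ℝ) + 1) ^ r * Sp p (n + 1) = Sp (p + r) (n + 1) := by
  induction n with
  | zero =>
    simp [Sp, Real.rpow_add (by norm_num : (0:ℝ) < 1)]
  | succ n ih =>
    rw [Finset.sum_range_succ, Sp_succ p (n + 1), Sp_succ (p + r) (n + 1)]
    have h1 : ((n + 1 : ℕ) : ℝ) + 1 = (n : ℝ) + 2 := by push_cast; ring
    have h2 : ((n : ℝ) + 2) ^ r * ((n : ℝ) + 2) ^ p = ((n : ℝ) + 2) ^ (p + r) := by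
      rw [← Real.rpow_add (by positivity)]; ring_nf
    rw [h1, ← ih]
    nlinarith [h2]


/-- the real value of the entries of `M_q M_p⁻¹`. -/
def ent (p q : ℝ) (n k : ℕ) : ℝ :=
  if k = n then ((n : ℝ) + 1) ^ (q - p) * Sp p (n + 1) / Sp q (n + 1)
  else Sp p (k + 1) * (((k : ℝ) + 1) ^ (q - p) - ((k : ℝ) + 2) ^ (q - p)) / Sp q (n + 1)

lemma entry_eq (p q : ℝ) {n k : ℕ} (hk : k ≤ n) :
    Mat.mul (Mp q) (MpInv p) n k = ((ent p q n k : ℝ) : ℂ) := by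
  have key : ∀ j ∈ Finset.range (n + 1),
      Mp q n j * MpInv p j k
        = (if j = k then Mp q n k * MpInv p k k else 0)
          + (if j = k + 1 then Mp q n (k + 1) * MpInv p (k + 1) k else 0) := by
    intro j _
    rcases eq_or_ne j k with rfl | h1
    · simp [MpInv]
    · rcases eq_or_ne j (k + 1) with rfl | h2
      · simp [MpInv, Nat.succ_ne_self]
      · have : MpInv p j k = 0 := by
          simp only [MpInv, if_neg (Ne.symm h1), if_neg (Ne.symm h2)]
        simp [this, h1, h2]
  rw [Mat.mul, Finset.sum_congr rfl key, Finset.sum_add_distrib,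
    Finset.sum_ite_eq' (Finset.range (n+1)) k, Finset.sum_ite_eq' (Finset.range (n+1)) (k+1)]
  have hq1 : (0:ℝ) < Sp q (n + 1) := Sp_pos q (Nat.succ_pos n)
  rcases eq_or_lt_of_le hk with rfl | hkn
  · -- diagonal
    have h2 : k + 1 ∉ Finset.range (k + 1) := by simp
    rw [if_pos (by simp), if_neg h2]
    have hMp : Mp q k k = ((((k : ℝ) + 1) ^ q / Sp q (k + 1) : ℝ) : ℂ) := by
      simp [Mp]
    have hMi : MpInv p k k = ((Sp p (k + 1) / ((k : ℝ) + 1) ^ p : ℝ) : ℂ) := by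
      simp [MpInv]
    have hreal : ((k:ℝ) + 1) ^ q / Sp q (k + 1) * (Sp p (k + 1) / ((k:ℝ) + 1) ^ p)
        = ent p q k k := by
      have h1 : ((k : ℝ) + 1) ^ p ≠ 0 := by positivity
      rw [ent, if_pos rfl, Real.rpow_sub (by positivity)]
      field_simp
    rw [hMp, hMi, ← Complex.ofReal_mul, hreal, add_zero]
  · -- off-diagonal
    rw [if_pos (Finset.mem_range.mpr (Nat.lt_succ_of_le hk)),
      if_pos (Finset.mem_range.mpr (by omega))]
    have hMp1 : Mp q n k = ((((k : ℝ) + 1) ^ q / Sp q (n + 1) : ℝ) : ℂ) := by simp [Mp, hk]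
    have hMp2 : Mp q n (k + 1) = ((((k : ℝ) + 2) ^ q / Sp q (n + 1) : ℝ) : ℂ) := by
      have e : ((k + 1 : ℕ) : ℝ) + 1 = (k : ℝ) + 2 := by push_cast; ring
      simp only [Mp, if_pos (show k + 1 ≤ n from hkn), e]
    have hMi1 : MpInv p k k = ((Sp p (k + 1) / ((k : ℝ) + 1) ^ p : ℝ) : ℂ) := by simp [MpInv]
    have hMi2 : MpInv p (k + 1) k = ((-(Sp p (k + 1)) / ((k : ℝ) + 2) ^ p : ℝ) : ℂ) := by
      have h' : ((k + 1 : ℕ) : ℝ) + 1 = (k : ℝ) + 2 := by push_cast; ring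
      simp only [MpInv, if_neg (show k ≠ k + 1 by omega), h', neg_div]
      simp
    have hreal : ((k:ℝ) + 1) ^ q / Sp q (n + 1) * (Sp p (k + 1) / ((k:ℝ) + 1) ^ p)
        + ((k:ℝ) + 2) ^ q / Sp q (n + 1) * (-(Sp p (k + 1)) / ((k:ℝ) + 2) ^ p)
        = ent p q n k := by
      rw [ent, if_neg hkn.ne]
      rw [Real.rpow_sub (by positivity : (0:ℝ) < (k:ℝ)+1),
        Real.rpow_sub (by positivity : (0:ℝ) < (k:ℝ)+2)]
      have h1 : ((k : ℝ) + 1) ^ p ≠ 0 := by positivity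
      have h2 : ((k : ℝ) + 2) ^ p ≠ 0 := by positivity
      field_simp
      ring
    rw [hMp1, hMp2, hMi1, hMi2, ← Complex.ofReal_mul, ← Complex.ofReal_mul,
      ← Complex.ofReal_add, hreal]

lemma rowSum_eq (p q : ℝ) (n : ℕ) :
    (Mat.mul (Mp q) (MpInv p)).rowSum n =
      (∑ k ∈ Finset.range n,
          Sp p (k + 1) * |((k : ℝ) + 1) ^ (q - p) - ((k : ℝ) + 2) ^ (q - p)|
        + ((n : ℝ) + 1) ^ (q - p) * Sp p (n + 1)) / Sp q (n + 1) := by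
  have hq1 : (0:ℝ) < Sp q (n + 1) := Sp_pos q n.succ_pos
  unfold Mat.rowSum
  rw [Finset.sum_congr rfl (fun i hi => by
    rw [entry_eq p q (Nat.lt_succ_iff.mp (Finset.mem_range.mp hi)), Complex.norm_real,
      Real.norm_eq_abs])]
  rw [Finset.sum_range_succ]
  have hdiag : |ent p q n n| = ((n : ℝ) + 1) ^ (q - p) * Sp p (n + 1) / Sp q (n + 1) := by
    rw [ent, if_pos rfl, abs_of_nonneg (div_nonneg (mul_nonneg (Real.rpow_nonneg (by positivity) _) (Sp_nonneg p (n + 1))) hq1.le)]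
  have hoff : ∀ k ∈ Finset.range n, |ent p q n k|
      = Sp p (k + 1) * |((k : ℝ) + 1) ^ (q - p) - ((k : ℝ) + 2) ^ (q - p)| / Sp q (n + 1) := by
    intro k hk
    rw [ent, if_neg (Finset.mem_range.mp hk).ne, abs_div, abs_mul,
      abs_of_nonneg (Sp_nonneg p (k + 1)), abs_of_pos hq1]
  rw [Finset.sum_congr rfl hoff, hdiag, ← Finset.sum_div, ← add_div]

lemma rowSum_of_le {p q : ℝ} (hqp : q ≤ p) (n : ℕ) :
    (Mat.mul (Mp q) (MpInv p)).rowSum n = 1 := by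
  have hq1 : (0:ℝ) < Sp q (n + 1) := Sp_pos q n.succ_pos
  rw [rowSum_eq]
  have habel := abel_id p (q - p) n
  rw [show p + (q - p) = q by ring] at habel
  have habs : ∀ k ∈ Finset.range n,
      Sp p (k + 1) * |((k : ℝ) + 1) ^ (q - p) - ((k : ℝ) + 2) ^ (q - p)|
        = Sp p (k + 1) * (((k : ℝ) + 1) ^ (q - p) - ((k : ℝ) + 2) ^ (q - p)) := by
    intro k _
    rw [abs_of_nonneg (sub_nonneg.mpr (Real.rpow_le_rpow_of_nonpos (by positivity)
      (by linarith) (by linarith)))]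
  rw [Finset.sum_congr rfl habs, habel, div_self hq1.ne']

lemma rowSum_of_lt {p q : ℝ} (hpq : p < q) (n : ℕ) :
    (Mat.mul (Mp q) (MpInv p)).rowSum n
      = 2 * ((n : ℝ) + 1) ^ (q - p) * Sp p (n + 1) / Sp q (n + 1) - 1 := by
  have hq1 : (0:ℝ) < Sp q (n + 1) := Sp_pos q n.succ_pos
  rw [rowSum_eq]
  have habel := abel_id p (q - p) n
  rw [show p + (q - p) = q by ring] at habel
  have habs : ∀ k ∈ Finset.range n,
      Sp p (k + 1) * |((k : ℝ) + 1) ^ (q - p) - ((k : ℝ) + 2) ^ (q - p)|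
        = -(Sp p (k + 1) * (((k : ℝ) + 1) ^ (q - p) - ((k : ℝ) + 2) ^ (q - p))) := by
    intro k _
    rw [abs_of_nonpos (sub_nonpos.mpr (Real.rpow_le_rpow (by positivity)
      (by linarith) (by linarith))), mul_neg]
  rw [Finset.sum_congr rfl habs, Finset.sum_neg_distrib]
  rw [div_sub' hq1.ne', div_eq_div_iff hq1.ne' hq1.ne']
  nlinarith [habel]

lemma key_le {s : ℝ} (h0 : 0 ≤ s) (h1 : s ≤ 1) (m : ℕ) :
    (m : ℝ) ^ s + s * ((m : ℝ) + 1) ^ (s - 1) ≤ ((m : ℝ) + 1) ^ s := by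
  have hm1 : (0:ℝ) < (m : ℝ) + 1 := by positivity
  have hber := rpow_one_add_le_one_add_mul_self
    (show (-1:ℝ) ≤ -(1 / ((m:ℝ) + 1)) by
      rw [neg_le_neg_iff]
      exact div_le_one_of_le₀ (by linarith) hm1.le) h0 h1
  have h1s : (1:ℝ) + -(1 / ((m:ℝ) + 1)) = (m : ℝ) / ((m : ℝ) + 1) := by
    field_simp
    ring
  rw [h1s] at hber
  have := mul_le_mul_of_nonneg_right hber (Real.rpow_nonneg hm1.le s)
  rw [Real.div_rpow (by positivity) hm1.le, div_mul_cancel₀] at this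
  · have heq : (1 + s * -(1 / ((m:ℝ) + 1))) * ((m:ℝ) + 1) ^ s
        = ((m:ℝ) + 1) ^ s - s * ((m:ℝ) + 1) ^ (s - 1) := by
      rw [Real.rpow_sub hm1, Real.rpow_one]
      field_simp
      ring
    rw [heq] at this
    linarith
  · exact (Real.rpow_pos_of_pos hm1 s).ne'

lemma key_ge {s : ℝ} (h1 : 1 ≤ s) (m : ℕ) :
    ((m : ℝ) + 1) ^ s ≤ (m : ℝ) ^ s + s * ((m : ℝ) + 1) ^ (s - 1) := by
  have hm1 : (0:ℝ) < (m : ℝ) + 1 := by positivity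
  have hber := one_add_mul_self_le_rpow_one_add
    (show (-1:ℝ) ≤ -(1 / ((m:ℝ) + 1)) by
      rw [neg_le_neg_iff]
      exact div_le_one_of_le₀ (by linarith) hm1.le) h1
  have h1s : (1:ℝ) + -(1 / ((m:ℝ) + 1)) = (m : ℝ) / ((m : ℝ) + 1) := by
    field_simp
    ring
  rw [h1s] at hber
  have := mul_le_mul_of_nonneg_right hber (Real.rpow_nonneg hm1.le s)
  rw [Real.div_rpow (by positivity) hm1.le, div_mul_cancel₀] at this
  · have heq : (1 + s * -(1 / ((m:ℝ) + 1))) * ((m:ℝ) + 1) ^ s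
        = ((m:ℝ) + 1) ^ s - s * ((m:ℝ) + 1) ^ (s - 1) := by
      rw [Real.rpow_sub hm1, Real.rpow_one]
      field_simp
      ring
    rw [heq] at this
    linarith
  · exact (Real.rpow_pos_of_pos hm1 s).ne'

lemma Sp_upper {p : ℝ} (hp : -1 < p) (m : ℕ) :
    Sp p m ≤ (1 + 1 / (p + 1)) * (m : ℝ) ^ (p + 1) := by
  have hp1 : (0:ℝ) < p + 1 := by linarith
  have hC : (1:ℝ) ≤ 1 + 1 / (p + 1) := by
    have : 0 < 1 / (p + 1) := by positivity
    linarith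
  rcases le_or_gt 0 p with hp0 | hp0
  · -- p ≥ 0
    rcases Nat.eq_zero_or_pos m with rfl | hm
    · simp [Sp, Real.zero_rpow hp1.ne']
    have hmR : (0:ℝ) < (m : ℝ) := by exact_mod_cast hm
    have h1 : Sp p m ≤ (m : ℝ) * (m : ℝ) ^ p := by
      calc Sp p m ≤ ∑ _i ∈ Finset.range m, (m : ℝ) ^ p := by
            apply Finset.sum_le_sum
            intro i hi
            exact Real.rpow_le_rpow (by positivity)
              (by exact_mod_cast Nat.succ_le_of_lt (Finset.mem_range.mp hi)) hp0
        _ = (m : ℝ) * (m : ℝ) ^ p := by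
            rw [Finset.sum_const, Finset.card_range, nsmul_eq_mul]
    have h2 : (m : ℝ) * (m : ℝ) ^ p = (m : ℝ) ^ (p + 1) := by
      rw [Real.rpow_add_one hmR.ne']; ring
    calc Sp p m ≤ (m : ℝ) ^ (p + 1) := by rw [← h2]; exact h1
      _ ≤ (1 + 1 / (p + 1)) * (m : ℝ) ^ (p + 1) := by
          nlinarith [Real.rpow_nonneg (Nat.cast_nonneg m) (p + 1)]
  · -- -1 < p < 0
    have hind : ∀ k : ℕ, Sp p k ≤ (k : ℝ) ^ (p + 1) / (p + 1) := by
      intro k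
      induction k with
      | zero => simp [Sp, Real.zero_rpow hp1.ne']
      | succ k ih =>
        rw [Sp_succ]
        have hkey := key_le hp1.le (by linarith) k
        rw [show p + 1 - 1 = p by ring] at hkey
        rw [Nat.cast_succ, le_div_iff₀ hp1]
        have ih' : Sp p k * (p + 1) ≤ (k : ℝ) ^ (p + 1) := (le_div_iff₀ hp1).mp ih
        nlinarith [hkey]
    calc Sp p m ≤ (m : ℝ) ^ (p + 1) / (p + 1) := hind m
      _ ≤ (1 + 1 / (p + 1)) * (m : ℝ) ^ (p + 1) := by
          rw [div_eq_mul_one_div, mul_comm]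
          apply mul_le_mul_of_nonneg_right _ (Real.rpow_nonneg (Nat.cast_nonneg m) _)
          linarith

lemma Sp_lower {q : ℝ} (hq : -1 < q) (m : ℕ) :
    (m : ℝ) ^ (q + 1) ≤ max (q + 1) 1 * Sp q m := by
  have hq1 : (0:ℝ) < q + 1 := by linarith
  rcases le_or_gt q 0 with hq0 | hq0
  · rcases Nat.eq_zero_or_pos m with rfl | hm
    · simp [Sp, Real.zero_rpow hq1.ne']
    have hmR : (0:ℝ) < (m : ℝ) := by exact_mod_cast hm
    have h1 : (m : ℝ) * (m : ℝ) ^ q ≤ Sp q m := by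
      calc (m : ℝ) * (m : ℝ) ^ q = ∑ _i ∈ Finset.range m, (m : ℝ) ^ q := by
            rw [Finset.sum_const, Finset.card_range, nsmul_eq_mul]
        _ ≤ Sp q m := by
            apply Finset.sum_le_sum
            intro i hi
            exact Real.rpow_le_rpow_of_nonpos (by positivity)
              (by exact_mod_cast Nat.succ_le_of_lt (Finset.mem_range.mp hi)) hq0
    have h2 : (m : ℝ) ^ (q + 1) = (m : ℝ) * (m : ℝ) ^ q := by
      rw [Real.rpow_add_one hmR.ne']; ring
    calc (m : ℝ) ^ (q + 1) ≤ Sp q m := by rw [h2]; exact h1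
      _ ≤ max (q + 1) 1 * Sp q m := by
          nlinarith [Sp_nonneg q m, le_max_right (q + 1) (1:ℝ)]
  · have hind : ∀ k : ℕ, (k : ℝ) ^ (q + 1) ≤ (q + 1) * Sp q k := by
      intro k
      induction k with
      | zero => simp [Sp, Real.zero_rpow hq1.ne']
      | succ k ih =>
        have hkey := key_ge (by linarith : (1:ℝ) ≤ q + 1) k
        rw [show q + 1 - 1 = q by ring] at hkey
        rw [Nat.cast_succ, Sp_succ]
        nlinarith [hkey]
    calc (m : ℝ) ^ (q + 1) ≤ (q + 1) * Sp q m := hind m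
      _ ≤ max (q + 1) 1 * Sp q m := by
          nlinarith [Sp_nonneg q m, le_max_left (q + 1) (1:ℝ)]

lemma ratio_bound {p q : ℝ} (hp : -1 < p) (hpq : p < q) :
    ∃ K : ℝ, 0 ≤ K ∧ ∀ n : ℕ,
      ((n : ℝ) + 1) ^ (q - p) * Sp p (n + 1) ≤ K * Sp q (n + 1) := by
  have hq : -1 < q := by linarith
  have hp1 : (0:ℝ) < p + 1 := by linarith
  set C : ℝ := 1 + 1 / (p + 1) with hC
  set D : ℝ := max (q + 1) 1 with hD
  have hCpos : 0 < C := by positivity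
  have hDpos : (0:ℝ) < D := lt_of_lt_of_le one_pos (le_max_right _ _)
  refine ⟨C * D, by positivity, fun n => ?_⟩
  have hm : (0:ℝ) < (n : ℝ) + 1 := by positivity
  have hmc : ((n + 1 : ℕ) : ℝ) = (n : ℝ) + 1 := by push_cast; ring
  have h1 : Sp p (n + 1) ≤ C * ((n : ℝ) + 1) ^ (p + 1) := by
    have := Sp_upper hp (n + 1); rwa [hmc] at this
  have h2 : ((n : ℝ) + 1) ^ (q + 1) ≤ D * Sp q (n + 1) := by
    have := Sp_lower hq (n + 1); rwa [hmc] at this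
  have h3 : ((n : ℝ) + 1) ^ (q - p) * ((n : ℝ) + 1) ^ (p + 1) = ((n : ℝ) + 1) ^ (q + 1) := by
    rw [← Real.rpow_add hm]; ring_nf
  calc ((n : ℝ) + 1) ^ (q - p) * Sp p (n + 1)
      ≤ ((n : ℝ) + 1) ^ (q - p) * (C * ((n : ℝ) + 1) ^ (p + 1)) :=
        mul_le_mul_of_nonneg_left h1 (Real.rpow_nonneg hm.le _)
    _ = C * ((n : ℝ) + 1) ^ (q + 1) := by rw [← h3]; ring
    _ ≤ C * (D * Sp q (n + 1)) := mul_le_mul_of_nonneg_left h2 hCpos.le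
    _ = C * D * Sp q (n + 1) := by ring

/-- If `q ≤ p` or `-1 < p < q`, the pair `(M_p, M_q)` satisfies (*C), i.e. the matrix
`C = M_q M_p⁻¹` has bounded absolute row sums; moreover when `q ≤ p` the row sums all
equal `1`, and when `-1 < p < q` the `n`-th row sum equals
`2 n^{q-p} S(n,p)/S(n,q) - 1` (here reindexed so that row `n` is the `(n+1)`-st row). -/
theorem statement17 (p q : ℝ) (hpq : q ≤ p ∨ (-1 < p ∧ p < q)) :
    (Mat.mul (Mp q) (MpInv p)).StarC ∧
    (q ≤ p → ∀ n : ℕ, (Mat.mul (Mp q) (MpInv p)).rowSum n = 1) ∧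
    ((-1 < p ∧ p < q) → ∀ n : ℕ,
      (Mat.mul (Mp q) (MpInv p)).rowSum n =
        2 * ((n : ℝ) + 1) ^ (q - p) * Sp p (n + 1) / Sp q (n + 1) - 1) := by
  refine ⟨?_, fun hqp n => rowSum_of_le hqp n, fun h n => rowSum_of_lt h.2 n⟩
  rcases hpq with hqp | ⟨hp, hpq⟩
  · exact ⟨1, fun n => le_of_eq (rowSum_of_le hqp n)⟩
  · obtain ⟨K, hK0, hK⟩ := ratio_bound hp hpq
    refine ⟨2 * K, fun n => ?_⟩
    have hq1 : (0:ℝ) < Sp q (n + 1) := Sp_pos q n.succ_pos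
    rw [rowSum_of_lt hpq]
    have h1 := hK n
    have h2 : 2 * ((n : ℝ) + 1) ^ (q - p) * Sp p (n + 1) / Sp q (n + 1) ≤ 2 * K := by
      rw [div_le_iff₀ hq1]
      nlinarith
    linarith
end
end
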